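/- arXiv:1807.10338 — 2 statements merged into one kernel-verified Lean document; each statement's English description precedes it below -/
import Mathlib

section
/- For all a, b > 0, the expectation of log Y under the Beta(a,b) distribution equals ψ(a) − ψ(a+b): ∫₀¹ (log y) · f_{a,b}(y) dy = ψ(a) − ψ(a+b). -/
open MeasureTheory Real Set

/-- The digamma function ψ(x) = Γ'(x)/Γ(x). -/
noncomputable def digamma (x : ℝ) : ℝ := deriv Real.Gamma x / Real.Gamma x

/-- The Beta(a,b) density f_{a,b}(y) = y^{a−1}(1−y)^{b−1}/B(a,b),
with B(a,b) = Γ(a)Γ(b)/Γ(a+b). -/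
noncomputable def betaDensity (a b y : ℝ) : ℝ :=
  y ^ (a - 1) * (1 - y) ^ (b - 1) / (Real.Gamma a * Real.Gamma b / Real.Gamma (a + b))

/-!
With `B(s, r) = ∫₀¹ y^(s-1) (1-y)^(r-1) dy = Γ(s)Γ(r)/Γ(s+r)`, the expectation of `log Y` is
`B(a, b)⁻¹ ∫₀¹ log y · y^(a-1) (1-y)^(b-1) dy = ∂ₐ log B(a, b) = ψ(a) - ψ(a+b)`.
Differentiating under the integral sign is justified by `|log y| ≤ δ⁻¹ y^(-δ)` on `(0, 1]`: for
exponents `t > a/2` the `t`-derivative of the integrand is dominated by a multiple of the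
integrable `y^(a/4-1) (1-y)^(b-1)`.
-/

open ProbabilityTheory (beta beta_pos beta_eq_betaIntegralReal)

noncomputable def betaIntegrand (s r y : ℝ) : ℝ := y ^ (s - 1) * (1 - y) ^ (r - 1)

lemma ofReal_betaIntegrand (s r : ℝ) {y : ℝ} (hy : y ∈ Icc (0 : ℝ) 1) :
    ((betaIntegrand s r y : ℝ) : ℂ) = (y : ℂ) ^ ((s : ℂ) - 1) * (1 - (y : ℂ)) ^ ((r : ℂ) - 1) := by
  rw [betaIntegrand, Complex.ofReal_mul, Complex.ofReal_cpow hy.1,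
    Complex.ofReal_cpow (sub_nonneg.2 hy.2)]
  push_cast
  rfl

lemma integrableOn_betaIntegrand {s r : ℝ} (hs : 0 < s) (hr : 0 < r) :
    IntegrableOn (betaIntegrand s r) (Ioo 0 1) := by
  have hc := (intervalIntegrable_iff_integrableOn_Ioo_of_le zero_le_one).mp
    (Complex.betaIntegral_convergent (u := s) (v := r) (by simpa) (by simpa))
  have := (hc.congr_fun (fun y hy ↦ (ofReal_betaIntegrand s r (Ioo_subset_Icc_self hy)).symm)
    measurableSet_Ioo).re
  simpa [IntegrableOn] using this

lemma integral_betaIntegrand {s r : ℝ} (hs : 0 < s) (hr : 0 < r) :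
    ∫ y in Ioo 0 1, betaIntegrand s r y = beta s r := by
  rw [beta_eq_betaIntegralReal s r hs hr, Complex.betaIntegral,
    intervalIntegral.integral_congr (g := fun y ↦ ((betaIntegrand s r y : ℝ) : ℂ))
      (fun y hy ↦ (ofReal_betaIntegrand s r (by rwa [uIcc_of_le zero_le_one] at hy)).symm),
    intervalIntegral.integral_ofReal, Complex.ofReal_re,
    intervalIntegral.integral_of_le zero_le_one, integral_Ioc_eq_integral_Ioo]

lemma abs_log_mul_rpow_le {y δ : ℝ} (hy₀ : 0 < y) (hy₁ : y ≤ 1) (hδ : 0 < δ) (t : ℝ) :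
    |log y| * y ^ t ≤ δ⁻¹ * y ^ (t - δ) := by
  have h := (abs_log_mul_self_rpow_lt y δ hy₀ hy₁ hδ).le
  calc |log y| * y ^ t = |log y * y ^ δ| * y ^ (t - δ) := by
        rw [abs_mul, abs_of_pos (rpow_pos_of_pos hy₀ δ), mul_assoc, ← rpow_add hy₀,
          add_sub_cancel]
    _ ≤ δ⁻¹ * y ^ (t - δ) := by
        rw [← one_div]
        exact mul_le_mul_of_nonneg_right h (rpow_nonneg hy₀.le _)

lemma hasDerivAt_integral_betaIntegrand {s r : ℝ} (hs : 0 < s) (hr : 0 < r) :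
    HasDerivAt (fun t ↦ ∫ y in Ioo 0 1, betaIntegrand t r y)
      (∫ y in Ioo 0 1, log y * betaIntegrand s r y) s := by
  refine (hasDerivAt_integral_of_dominated_loc_of_deriv_le (x₀ := s) (s := Ioi (s / 2))
    (F := fun t y ↦ betaIntegrand t r y) (F' := fun t y ↦ log y * betaIntegrand t r y)
    (bound := fun y ↦ (s / 4)⁻¹ * betaIntegrand (s / 4) r y) (Ioi_mem_nhds (by linarith))
    (Filter.Eventually.of_forall fun t ↦ by unfold betaIntegrand; fun_prop)
    (integrableOn_betaIntegrand hs hr) (by unfold betaIntegrand; fun_prop) ?_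
    ((integrableOn_betaIntegrand (by linarith) hr).const_mul _) ?_).2
  · refine ae_restrict_of_forall_mem measurableSet_Ioo fun y ⟨hy₀, hy₁⟩ t (ht : s / 2 < t) ↦ ?_
    have h1y : 0 ≤ (1 - y) ^ (r - 1) := rpow_nonneg (by linarith) _
    calc ‖log y * betaIntegrand t r y‖ = |log y| * y ^ (t - 1) * (1 - y) ^ (r - 1) := by
          rw [betaIntegrand, norm_mul, norm_mul, Real.norm_eq_abs, Real.norm_of_nonneg h1y,
            Real.norm_of_nonneg (rpow_nonneg hy₀.le _), mul_assoc]
      _ ≤ |log y| * y ^ (s / 2 - 1) * (1 - y) ^ (r - 1) := by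
          gcongr ?_ * _
          exact mul_le_mul_of_nonneg_left
            (rpow_le_rpow_of_exponent_ge hy₀ hy₁.le (by linarith)) (abs_nonneg _)
      _ ≤ (s / 4)⁻¹ * y ^ (s / 2 - 1 - s / 4) * (1 - y) ^ (r - 1) := by
          gcongr ?_ * _
          exact abs_log_mul_rpow_le hy₀ hy₁.le (by linarith) _
      _ = (s / 4)⁻¹ * betaIntegrand (s / 4) r y := by
          rw [betaIntegrand, mul_assoc]; ring_nf
  · refine ae_restrict_of_forall_mem measurableSet_Ioo fun y ⟨hy₀, _⟩ t _ ↦ ?_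
    have h := (((hasDerivAt_id t).sub_const 1).const_rpow hy₀).mul_const ((1 - y) ^ (r - 1))
    exact h.congr_deriv (by simp only [betaIntegrand, id]; ring)

lemma hasDerivAt_Gamma_of_pos {x : ℝ} (hx : 0 < x) :
    HasDerivAt Gamma (digamma x * Gamma x) x := by
  have hdiff : DifferentiableAt ℝ Gamma x :=
    differentiableAt_Gamma fun m ↦ (neg_nonpos.2 (Nat.cast_nonneg m)).trans_lt hx |>.ne'
  rw [digamma, div_mul_cancel₀ _ (Gamma_pos_of_pos hx).ne']
  exact hdiff.hasDerivAt

lemma hasDerivAt_beta_left {s r : ℝ} (hs : 0 < s) (hr : 0 < r) :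
    HasDerivAt (fun t ↦ beta t r) (beta s r * (digamma s - digamma (s + r))) s := by
  have hsr : 0 < s + r := add_pos hs hr
  have h := ((hasDerivAt_Gamma_of_pos hs).mul_const (Gamma r)).div
    ((hasDerivAt_Gamma_of_pos hsr).comp_add_const s r)
    (Gamma_pos_of_pos hsr).ne'
  refine h.congr_deriv ?_
  rw [beta]
  field_simp

lemma integral_log_mul_betaIntegrand {s r : ℝ} (hs : 0 < s) (hr : 0 < r) :
    ∫ y in Ioo 0 1, log y * betaIntegrand s r y = beta s r * (digamma s - digamma (s + r)) := by
  have h : (fun t ↦ ∫ y in Ioo 0 1, betaIntegrand t r y) =ᶠ[nhds s] fun t ↦ beta t r :=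
    Filter.eventually_of_mem (Ioi_mem_nhds hs) fun t ht ↦ integral_betaIntegrand ht hr
  exact ((hasDerivAt_integral_betaIntegrand hs hr).congr_of_eventuallyEq h.symm).unique
    (hasDerivAt_beta_left hs hr)

/-- E[log Y] under Beta(a,b) equals ψ(a) − ψ(a+b). -/
theorem beta_mean_log (a b : ℝ) (ha : 0 < a) (hb : 0 < b) :
    ∫ y in Set.Ioo (0:ℝ) 1, Real.log y * betaDensity a b y
      = digamma a - digamma (a + b) := by
  have h_density : ∀ y, log y * betaDensity a b y = log y * betaIntegrand a b y / beta a b :=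
    fun y ↦ mul_div_assoc _ _ _ |>.symm
  simp_rw [h_density, integral_div, integral_log_mul_betaIntegrand ha hb]
  exact mul_div_cancel_left₀ _ (beta_pos ha hb).ne'
end

section
/- For all a, b > 0, the variance of the logit log(Y/(1−Y)) under the Beta(a,b) distribution equals ψ₁(a) + ψ₁(b): ∫₀¹ (log(y/(1−y)) − (ψ(a) − ψ(b)))² · f_{a,b}(y) dy = ψ₁(a) + ψ₁(b). -/
open MeasureTheory Real Set

/-- The trigamma function ψ₁ = ψ'. -/
noncomputable def trigamma (x : ℝ) : ℝ := deriv digamma x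

/-! The logit `X = log (Y / (1 - Y))` of `Y ~ Beta(a, b)` satisfies
`exp (t X) f_{a,b} = (B(a + t, b - t) / B(a, b)) f_{a+t,b-t}`, so its moment generating function is
`Γ(a + t) Γ(b - t) / (Γ(a) Γ(b))` for `-a < t < b`. Its cumulant generating function is therefore
`log Γ(a + t) + log Γ(b - t) - log (Γ(a) Γ(b))`, whose first two derivatives at `0`, the mean and
the variance of `X`, are `ψ(a) - ψ(b)` and `ψ₁(a) + ψ₁(b)`. -/

open ProbabilityTheory Filter Topology

lemma Real.analyticAt_Gamma {x : ℝ} (hx : 0 < x) : AnalyticAt ℝ Gamma x := by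
  have hC : AnalyticAt ℂ Complex.Gamma x := by
    refine DifferentiableOn.analyticAt (s := {z : ℂ | 0 < z.re}) (fun z hz => ?_)
      ((isOpen_lt continuous_const Complex.continuous_re).mem_nhds (by simpa using hx))
    refine (Complex.differentiableAt_Gamma z fun m hm => ?_).differentiableWithinAt
    have : (0 : ℝ) < -m := by simpa [hm] using hz
    linarith [m.cast_nonneg (α := ℝ)]
  have hre : Gamma = fun y : ℝ => (Complex.Gamma y).re := by
    funext y; rw [Complex.Gamma_ofReal, Complex.ofReal_re]
  rw [hre]
  exact Complex.reCLM.analyticAt _ |>.comp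
    (hC.restrictScalars.comp (Complex.ofRealCLM.analyticAt x))

lemma hasDerivAt_log_Gamma {x : ℝ} (hx : 0 < x) :
    HasDerivAt (fun y => log (Gamma y)) (digamma x) x :=
  (analyticAt_Gamma hx).differentiableAt.hasDerivAt.log (Gamma_pos_of_pos hx).ne'

lemma hasDerivAt_digamma {x : ℝ} (hx : 0 < x) : HasDerivAt digamma (trigamma x) x :=
  ((analyticAt_Gamma hx).deriv.differentiableAt.div (analyticAt_Gamma hx).differentiableAt
    (Gamma_pos_of_pos hx).ne').hasDerivAt

noncomputable def logit (y : ℝ) : ℝ := log (y / (1 - y))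

lemma betaPDFReal_eq_indicator (a b : ℝ) :
    betaPDFReal a b = (Ioo 0 1).indicator (betaDensity a b) := by
  funext y
  by_cases hy : y ∈ Ioo 0 1
  · rw [betaPDFReal, if_pos (show 0 < y ∧ y < 1 from hy), indicator_of_mem hy, betaDensity,
      beta]
    ring
  · rw [betaPDFReal, if_neg (show ¬(0 < y ∧ y < 1) from hy), indicator_of_notMem hy]

lemma betaDensity_nonneg {a b y : ℝ} (ha : 0 < a) (hb : 0 < b) (hy : y ∈ Ioo 0 1) :
    0 ≤ betaDensity a b y := by
  have := Gamma_pos_of_pos ha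
  have := Gamma_pos_of_pos hb
  have := Gamma_pos_of_pos (add_pos ha hb)
  have := hy.1
  have : 0 < 1 - y := sub_pos.2 hy.2
  unfold betaDensity
  positivity

lemma betaMeasure_eq_withDensity (a b : ℝ) :
    betaMeasure a b
      = (volume.restrict (Ioo 0 1)).withDensity fun y => ENNReal.ofReal (betaDensity a b y) := by
  rw [← withDensity_indicator measurableSet_Ioo, betaMeasure]
  congr 1
  funext y
  rw [betaPDF, betaPDFReal_eq_indicator]
  by_cases hy : y ∈ Ioo 0 1 <;> simp [hy]

lemma measurable_betaDensity (a b : ℝ) : Measurable (betaDensity a b) := by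
  unfold betaDensity; fun_prop

lemma integral_betaMeasure {a b : ℝ} (ha : 0 < a) (hb : 0 < b) (g : ℝ → ℝ) :
    ∫ y, g y ∂betaMeasure a b = ∫ y in Ioo 0 1, g y * betaDensity a b y := by
  rw [betaMeasure_eq_withDensity, integral_withDensity_eq_integral_toReal_smul
    (measurable_betaDensity a b).ennreal_ofReal (ae_of_all _ fun _ => ENNReal.ofReal_lt_top)]
  refine setIntegral_congr_fun measurableSet_Ioo fun y hy => ?_
  rw [ENNReal.toReal_ofReal (betaDensity_nonneg ha hb hy), smul_eq_mul, mul_comm]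

lemma integrable_betaMeasure_iff {a b : ℝ} (ha : 0 < a) (hb : 0 < b) {g : ℝ → ℝ} :
    Integrable g (betaMeasure a b)
      ↔ IntegrableOn (fun y => g y * betaDensity a b y) (Ioo 0 1) := by
  rw [betaMeasure_eq_withDensity, integrable_withDensity_iff
    (measurable_betaDensity a b).ennreal_ofReal (ae_of_all _ fun _ => ENNReal.ofReal_lt_top)]
  refine integrableOn_congr_fun (fun y hy => ?_) measurableSet_Ioo
  rw [ENNReal.toReal_ofReal (betaDensity_nonneg ha hb hy)]

lemma integrableOn_betaDensity {a b : ℝ} (ha : 0 < a) (hb : 0 < b) :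
    IntegrableOn (betaDensity a b) (Ioo 0 1) := by
  have := isProbabilityMeasureBeta ha hb
  simpa using (integrable_betaMeasure_iff ha hb).1 (integrable_const (1 : ℝ))

lemma integral_betaDensity {a b : ℝ} (ha : 0 < a) (hb : 0 < b) :
    ∫ y in Ioo 0 1, betaDensity a b y = 1 := by
  have := isProbabilityMeasureBeta ha hb
  simpa using (integral_betaMeasure ha hb fun _ => 1).symm

lemma exp_mul_logit_mul_betaDensity {a b t y : ℝ} (hat : 0 < a + t) (hbt : 0 < b - t)
    (hy : y ∈ Ioo 0 1) :
    exp (t * logit y) * betaDensity a b y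
      = Gamma (a + t) * Gamma (b - t) / (Gamma a * Gamma b) * betaDensity (a + t) (b - t) y := by
  obtain ⟨hy0, hy1⟩ := hy
  have h1y : 0 < 1 - y := sub_pos.2 hy1
  have := (Gamma_pos_of_pos hat).ne'
  have := (Gamma_pos_of_pos hbt).ne'
  rw [logit, mul_comm t, ← rpow_def_of_pos (div_pos hy0 h1y), div_rpow hy0.le h1y.le,
    betaDensity, betaDensity, show a + t + (b - t) = a + b by ring,
    show a + t - 1 = t + (a - 1) by ring, show b - t - 1 = (b - 1) - t by ring,
    rpow_add hy0, rpow_sub h1y (b - 1) t]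
  field_simp

lemma integrable_exp_mul_logit {a b t : ℝ} (ha : 0 < a) (hb : 0 < b) (ht : t ∈ Ioo (-a) b) :
    Integrable (fun y => exp (t * logit y)) (betaMeasure a b) := by
  have hat : 0 < a + t := by linarith [ht.1]
  have hbt : 0 < b - t := sub_pos.2 ht.2
  rw [integrable_betaMeasure_iff ha hb]
  exact IntegrableOn.congr_fun ((integrableOn_betaDensity hat hbt).const_mul _)
    (fun y hy => (exp_mul_logit_mul_betaDensity hat hbt hy).symm) measurableSet_Ioo

lemma zero_mem_interior_integrableExpSet_logit {a b : ℝ} (ha : 0 < a) (hb : 0 < b) :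
    0 ∈ interior (integrableExpSet logit (betaMeasure a b)) :=
  mem_interior_iff_mem_nhds.2 <| mem_of_superset (Ioo_mem_nhds (neg_neg_of_pos ha) hb)
    fun _ ht => integrable_exp_mul_logit ha hb ht

lemma mgf_logit_betaMeasure {a b t : ℝ} (ha : 0 < a) (hb : 0 < b) (ht : t ∈ Ioo (-a) b) :
    mgf logit (betaMeasure a b) t = Gamma (a + t) * Gamma (b - t) / (Gamma a * Gamma b) := by
  have hat : 0 < a + t := by linarith [ht.1]
  have hbt : 0 < b - t := sub_pos.2 ht.2
  rw [mgf, integral_betaMeasure ha hb, setIntegral_congr_fun measurableSet_Ioo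
    fun y hy => exp_mul_logit_mul_betaDensity hat hbt hy, integral_const_mul,
    integral_betaDensity hat hbt, mul_one]

lemma cgf_logit_betaMeasure {a b t : ℝ} (ha : 0 < a) (hb : 0 < b) (ht : t ∈ Ioo (-a) b) :
    cgf logit (betaMeasure a b) t
      = log (Gamma (a + t)) + log (Gamma (b - t)) - log (Gamma a * Gamma b) := by
  have hat : 0 < a + t := by linarith [ht.1]
  have hbt : 0 < b - t := sub_pos.2 ht.2
  rw [cgf, mgf_logit_betaMeasure ha hb ht, log_div, log_mul]
  all_goals positivity

lemma hasDerivAt_cgf_logit_betaMeasure {a b t : ℝ} (ha : 0 < a) (hb : 0 < b)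
    (ht : t ∈ Ioo (-a) b) :
    HasDerivAt (cgf logit (betaMeasure a b)) (digamma (a + t) - digamma (b - t)) t := by
  have h := (((hasDerivAt_log_Gamma (by linarith [ht.1])).comp_const_add a t).fun_add
    ((hasDerivAt_log_Gamma (sub_pos.2 ht.2)).comp_const_sub b t)).sub_const
    (log (Gamma a * Gamma b))
  rw [← sub_eq_add_neg] at h
  exact h.congr_of_eventuallyEq <| eventually_of_mem (Ioo_mem_nhds ht.1 ht.2)
    fun s hs => cgf_logit_betaMeasure ha hb hs

lemma deriv_cgf_logit_betaMeasure_zero {a b : ℝ} (ha : 0 < a) (hb : 0 < b) :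
    deriv (cgf logit (betaMeasure a b)) 0 = digamma a - digamma b := by
  simpa using (hasDerivAt_cgf_logit_betaMeasure ha hb ⟨neg_neg_of_pos ha, hb⟩).deriv

lemma iteratedDeriv_two_cgf_logit_betaMeasure_zero {a b : ℝ} (ha : 0 < a) (hb : 0 < b) :
    iteratedDeriv 2 (cgf logit (betaMeasure a b)) 0 = trigamma a + trigamma b := by
  have hderiv : deriv (cgf logit (betaMeasure a b)) =ᶠ[𝓝 0]
      fun t => digamma (a + t) - digamma (b - t) :=
    eventually_of_mem (Ioo_mem_nhds (neg_neg_of_pos ha) hb)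
      fun t ht => (hasDerivAt_cgf_logit_betaMeasure ha hb ht).deriv
  have h := ((hasDerivAt_digamma (x := a + 0) (by simpa)).comp_const_add a 0).fun_sub
    ((hasDerivAt_digamma (x := b - 0) (by simpa)).comp_const_sub b 0)
  rw [iteratedDeriv_succ, iteratedDeriv_one, hderiv.deriv_eq, h.deriv, add_zero, sub_zero,
    sub_neg_eq_add]

/-- Var[log(Y/(1−Y))] under Beta(a,b) equals ψ₁(a) + ψ₁(b). -/
theorem beta_var_logit (a b : ℝ) (ha : 0 < a) (hb : 0 < b) :
    ∫ y in Set.Ioo (0:ℝ) 1,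
      (Real.log (y / (1 - y)) - (digamma a - digamma b)) ^ 2 * betaDensity a b y
      = trigamma a + trigamma b := by
  have := isProbabilityMeasureBeta ha hb
  have h := iteratedDeriv_two_cgf_eq_integral (zero_mem_interior_integrableExpSet_logit ha hb)
  rw [iteratedDeriv_two_cgf_logit_betaMeasure_zero ha hb, deriv_cgf_logit_betaMeasure_zero ha hb,
    mgf_zero, div_one, integral_betaMeasure ha hb] at h
  simpa [logit] using h.symm
end
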